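/- arXiv:2112.04965 — 2 statements merged into one kernel-verified Lean document; each statement's English description precedes it below -/
import Mathlib

section
/- For all integers n ≥ 1 and m ≥ 1, if the player can win the (n, m) rotation game, then n = 1, or m = 1, or there exist a prime p and positive integers a, b with n = p^a and m = p^b. -/
/-- The state of the (n, m) rotation game after `k` turns: `s₀` is the initial
configuration, `y k` is the move added on turn `k+1`, and `r k` is the rotation
applied after that move. -/
def rotState {n m : ℕ} (y : ℕ → Fin n → ZMod m) (r : ℕ → Fin n)
    (s₀ : Fin n → ZMod m) : ℕ → Fin n → ZMod m
  | 0 => s₀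
  | k + 1 => fun i => (rotState y r s₀ k + y k) (i + r k)

/-- The first `N` moves of `y` form a winning sequence for the (n, m) rotation game. -/
def RotWinning (n m N : ℕ) (y : ℕ → Fin n → ZMod m) : Prop :=
  ∀ (s₀ : Fin n → ZMod m) (r : ℕ → Fin n), ∃ k ≤ N, rotState y r s₀ k = 0

/-- The player can win the (n, m) rotation game. -/
def RotCanWin (n m : ℕ) : Prop := ∃ N y, RotWinning n m N y

/-! Let primes `p ∣ m` and `q ∣ n` be distinct, `L` a field of characteristic `p` containing a
primitive `q`-th root of unity `ζ`, `φ : ZMod m → L` reduction mod `p`, and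
`F s = ∑ i, φ (s i) * ζ ^ i`. Then `F` is additive and
rotating `s` by `ρ` divides `F s` by `ζ ^ ρ`. If `F t ≠ 0`, the values `F (rotate ρ t)` for
`ρ = 0, 1` are distinct and nonzero, so for any next move `u` one of them keeps
`F (rotate ρ t + u) ≠ 0`. Rotating this way, the adversary keeps `F` of every state nonzero,
so no state is ever `0`. -/

section

variable {n m : ℕ} {L : Type*} [Field L]

def rotate (ρ : Fin n) (x : Fin n → ZMod m) : Fin n → ZMod m := fun i => x (i + ρ)

@[simp]
theorem rotate_zero [NeZero n] (x : Fin n → ZMod m) : rotate 0 x = x :=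
  funext fun i => by simp [rotate]

/-- The moves are fixed in advance, so the adversary may choose each rotation as a function
`σ k` of the current state; `rotState_adaptive` turns such a strategy into a rotation sequence. -/
def adaptiveRotState (y : ℕ → Fin n → ZMod m) (σ : ℕ → (Fin n → ZMod m) → Fin n)
    (s₀ : Fin n → ZMod m) : ℕ → Fin n → ZMod m
  | 0 => s₀
  | k + 1 => rotate (σ k (adaptiveRotState y σ s₀ k)) (adaptiveRotState y σ s₀ k + y k)

theorem rotState_adaptive (y : ℕ → Fin n → ZMod m) (σ : ℕ → (Fin n → ZMod m) → Fin n)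
    (s₀ : Fin n → ZMod m) (k : ℕ) :
    rotState y (fun j => σ j (adaptiveRotState y σ s₀ j)) s₀ k = adaptiveRotState y σ s₀ k := by
  induction k with
  | zero => rfl
  | succ k ih => simp only [rotState, adaptiveRotState, ih]; rfl

def configEval (φ : ZMod m →+* L) (ζ : L) : (Fin n → ZMod m) →+ L where
  toFun s := ∑ i, φ (s i) * ζ ^ (i : ℕ)
  map_zero' := by simp
  map_add' a b := by simp [add_mul, Finset.sum_add_distrib]

theorem configEval_single_zero [NeZero n] (φ : ZMod m →+* L) (ζ : L) :
    configEval φ ζ (Pi.single 0 1 : Fin n → ZMod m) = 1 := by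
  classical
  simp [configEval, Pi.single_apply]

theorem pow_mul_configEval_rotate {ζ : L} (hζ : ζ ^ n = 1) (φ : ZMod m →+* L) (ρ : Fin n)
    (x : Fin n → ZMod m) : ζ ^ (ρ : ℕ) * configEval φ ζ (rotate ρ x) = configEval φ ζ x := by
  have : NeZero n := ⟨ρ.pos.ne'⟩
  have hshift (i : Fin n) : ζ ^ (ρ : ℕ) * ζ ^ (i : ℕ) = ζ ^ ((i + ρ : Fin n) : ℕ) := by
    rw [Fin.val_add, ← pow_eq_pow_mod _ hζ, ← pow_add, add_comm]
  simp only [configEval, AddMonoidHom.coe_mk, ZeroHom.coe_mk, rotate, Finset.mul_sum,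
    mul_left_comm _ (φ _), hshift]
  exact Fintype.sum_equiv (Equiv.addRight ρ) _ _ fun _ => rfl

theorem configEval_rotate_ne_zero {ζ : L} (hζ : ζ ^ n = 1) (φ : ZMod m →+* L) (ρ : Fin n)
    {x : Fin n → ZMod m} (hx : configEval φ ζ x ≠ 0) : configEval φ ζ (rotate ρ x) ≠ 0 := by
  intro h0
  apply hx
  rw [← pow_mul_configEval_rotate hζ φ ρ, h0, mul_zero]

theorem exists_configEval_rotate_add_ne_zero (hn : 1 < n) {ζ : L} (hζ : ζ ^ n = 1) (hζ1 : ζ ≠ 1)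
    (φ : ZMod m →+* L) {t : Fin n → ZMod m} (ht : configEval φ ζ t ≠ 0) (u : Fin n → ZMod m) :
    ∃ ρ : Fin n, configEval φ ζ (rotate ρ t + u) ≠ 0 := by
  by_cases h0 : configEval φ ζ (t + u) = 0
  · let one : Fin n := ⟨1, hn⟩
    refine ⟨one, fun h1 => configEval_rotate_ne_zero hζ φ one ht ?_⟩
    have hζF := pow_mul_configEval_rotate hζ φ one t
    rw [map_add] at h0 h1
    rw [pow_one] at hζF
    have : (1 - ζ) * configEval φ ζ (rotate one t) = 0 := by linear_combination h1 - h0 - hζF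
    exact (mul_eq_zero.1 this).resolve_left (sub_ne_zero.2 hζ1.symm)
  · have : NeZero n := ⟨by omega⟩
    exact ⟨0, by rwa [rotate_zero]⟩

theorem not_rotCanWin_of_pow_eq_one (hn : 1 < n) (φ : ZMod m →+* L) {ζ : L} (hζ : ζ ^ n = 1)
    (hζ1 : ζ ≠ 1) : ¬ RotCanWin n m := by
  have : NeZero n := ⟨by omega⟩
  rintro ⟨N, y, hwin⟩
  set F := configEval (n := n) φ ζ
  have hstep (k : ℕ) (s : Fin n → ZMod m) :
      ∃ ρ, F (s + y k) ≠ 0 → F (rotate ρ (s + y k) + y (k + 1)) ≠ 0 := by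
    by_cases hs : F (s + y k) = 0
    · exact ⟨0, fun h => (h hs).elim⟩
    · obtain ⟨ρ, hρ⟩ := exists_configEval_rotate_add_ne_zero hn hζ hζ1 φ hs (y (k + 1))
      exact ⟨ρ, fun _ => hρ⟩
  choose σ hσ using hstep
  set e : Fin n → ZMod m := Pi.single 0 1
  have he : F e ≠ 0 := by simp [F, e, configEval_single_zero]
  obtain ⟨ρ₀, hρ₀⟩ := exists_configEval_rotate_add_ne_zero hn hζ hζ1 φ he (y 0)
  set s₀ := rotate ρ₀ e
  set a := adaptiveRotState y σ s₀
  have hmove (k : ℕ) : F (a k + y k) ≠ 0 := by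
    induction k with
    | zero => exact hρ₀
    | succ k ih => exact hσ k (a k) ih
  have hstate (k : ℕ) : F (a k) ≠ 0 := by
    cases k with
    | zero => exact configEval_rotate_ne_zero hζ φ ρ₀ he
    | succ k => exact configEval_rotate_ne_zero hζ φ _ (hmove k)
  obtain ⟨k, -, hk⟩ := hwin s₀ (fun j => σ j (a j))
  rw [rotState_adaptive] at hk
  exact hstate k (by rw [show a k = 0 from hk, map_zero])

end

theorem not_rotCanWin_of_prime_dvd {n m p q : ℕ} (hp : p.Prime) (hq : q.Prime) (hpq : p ≠ q)
    (hpm : p ∣ m) (hqn : q ∣ n) (hn : n ≠ 0) : ¬ RotCanWin n m := by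
  have : Fact p.Prime := ⟨hp⟩
  have : NeZero q := ⟨hq.ne_zero⟩
  have : NeZero (q : ZMod p) :=
    NeZero.of_not_dvd (ZMod p) fun h => hpq ((Nat.prime_dvd_prime_iff_eq hp hq).1 h)
  have hζ := IsCyclotomicExtension.zeta_spec q (ZMod p) (CyclotomicField q (ZMod p))
  exact not_rotCanWin_of_pow_eq_one (hq.one_lt.trans_le (Nat.le_of_dvd (by omega) hqn))
    ((algebraMap (ZMod p) (CyclotomicField q (ZMod p))).comp (ZMod.castHom hpm (ZMod p)))
    ((hζ.pow_eq_one_iff_dvd n).2 hqn) (hζ.ne_one hq.one_lt)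

theorem exists_pos_eq_pow_of_forall_prime_dvd_eq {n p : ℕ} (hn0 : n ≠ 0) (hn1 : n ≠ 1)
    (h : ∀ q, q.Prime → q ∣ n → q = p) : ∃ a, 0 < a ∧ n = p ^ a := by
  have hn := Nat.eq_prime_pow_of_unique_prime_dvd hn0 fun {q} hq hqn => h q hq hqn
  refine ⟨_, Nat.pos_of_ne_zero fun ha => hn1 ?_, hn⟩
  rw [hn, ha, pow_zero]

theorem exists_prime_pow_eq_of_forall_prime_dvd_eq {n m : ℕ} (hn0 : n ≠ 0) (hm0 : m ≠ 0)
    (hn1 : n ≠ 1) (hm1 : m ≠ 1) (h : ∀ p q, p.Prime → q.Prime → p ∣ m → q ∣ n → p = q) :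
    ∃ p a b : ℕ, p.Prime ∧ 0 < a ∧ 0 < b ∧ n = p ^ a ∧ m = p ^ b := by
  have hp := Nat.minFac_prime hn1
  have hm := Nat.minFac_prime hm1
  have hmn : m.minFac = n.minFac := h _ _ hm hp m.minFac_dvd n.minFac_dvd
  obtain ⟨a, ha, hna⟩ := exists_pos_eq_pow_of_forall_prime_dvd_eq hn0 hn1 fun q hq hqn =>
    (h _ _ hm hq m.minFac_dvd hqn).symm.trans hmn
  obtain ⟨b, hb, hmb⟩ := exists_pos_eq_pow_of_forall_prime_dvd_eq hm0 hm1 fun r hr hrm =>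
    h _ _ hr hp hrm n.minFac_dvd
  exact ⟨_, a, b, hp, ha, hb, hna, hmb⟩

theorem rotation_game_only_if (n m : ℕ) (hn : 1 ≤ n) (hm : 1 ≤ m) (h : RotCanWin n m) :
    n = 1 ∨ m = 1 ∨
      ∃ p a b : ℕ, p.Prime ∧ 0 < a ∧ 0 < b ∧ n = p ^ a ∧ m = p ^ b := by
  by_cases hn1 : n = 1
  · exact Or.inl hn1
  by_cases hm1 : m = 1
  · exact Or.inr (Or.inl hm1)
  refine Or.inr (Or.inr (exists_prime_pow_eq_of_forall_prime_dvd_eq (by omega) (by omega)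
    hn1 hm1 fun p q hp hq hpm hqn => ?_))
  by_contra hpq
  exact not_rotCanWin_of_prime_dvd hp hq hpq hpm hqn (by omega) h
end

section
/- For every prime p and all positive integers a and b, there exists a winning sequence of moves of length p^{b·p^a} − 1 = m^n − 1 for the (p^a, p^b) rotation game; in particular the player can win the (p^a, p^b) rotation game. -/
/-!
Let `σ` be the rotation by one place on `V = (ℤ/p^b)^(p^a)` and `D = σ - 1`. Modulo `p` we have
`D ^ p^a = σ ^ p^a - 1 = 0`, and `p` is nilpotent, so `D` is nilpotent. The images `D^k V` form
a chain of rotation-invariant subgroups from `V` down to `0`, and rotations act trivially on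
each quotient `D^k V / D^(k+1) V`, since `σ x - x = D x`.

A winning sequence of length `|H| - 1` for starting states in `H = D^(k+1) V` lifts to one of
length `|G| - 1` for `G = D^k V`: play it once for each coset of `H` in `G`, separating
consecutive blocks by a single move that shifts the class of the state modulo `H`. The moves of
a block lie in `H` and rotations fix classes, so the class of the state changes only at these
separating moves; choosing them to run through all cosets, some block starts inside `H`,
and that block wins.
-/

theorem isNilpotent_sub_one_of_pow_prime_pow_eq_one {R : Type*} [Ring R] {p : ℕ} (hp : p.Prime)
    (hpR : IsNilpotent (p : R)) {x : R} {k : ℕ} (hx : x ^ p ^ k = 1) : IsNilpotent (x - 1) := by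
  obtain ⟨r, hr⟩ := (Commute.one_right (x - 1)).exists_add_pow_prime_pow_eq hp k
  rw [sub_add_cancel, hx, one_pow, mul_one, mul_assoc, eq_comm, add_right_comm, add_eq_right] at hr
  have h : (x - 1) ^ p ^ k = -(p * ((x - 1) * r)) := eq_neg_of_add_eq_zero_left hr
  exact IsNilpotent.of_pow (h ▸ ((Nat.cast_commute p _).isNilpotent_mul_right hpR).neg)

theorem ncard_union_preimage_add {V : Type*} [AddCommGroup V] [Finite V] {H : AddSubgroup V}
    {S : Set V} {e : V} (hSH : ∀ s ∈ S, ∀ h ∈ H, s + h ∈ S) (heS : e ∉ S) :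
    ((H : Set V) ∪ (· + e) ⁻¹' S).ncard = Nat.card H + S.ncard := by
  have hdisj : Disjoint (H : Set V) ((· + e) ⁻¹' S) :=
    Set.disjoint_left.2 fun x hxH hxS => heS (by simpa using hSH _ hxS _ (neg_mem hxH))
  rw [Set.ncard_union_eq hdisj, Set.ncard_preimage_of_injective_subset_range
    (add_left_injective e) fun s _ => ⟨s - e, sub_add_cancel s e⟩]
  exact congrArg (· + S.ncard) (Nat.card_coe_set_eq _).symm

namespace RotationGame

open Fin.NatCast

variable {n m : ℕ}

def WinsFrom (S : Set (Fin n → ZMod m)) (N : ℕ) (y : ℕ → Fin n → ZMod m) : Prop :=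
  ∀ s₀ ∈ S, ∀ r : ℕ → Fin n, ∃ k ≤ N, rotState y r s₀ k = 0

theorem rotWinning_iff_winsFrom_univ (N : ℕ) (y : ℕ → Fin n → ZMod m) :
    RotWinning n m N y ↔ WinsFrom Set.univ N y := by
  simp [RotWinning, WinsFrom]

def prepend (v : ℕ → Fin n → ZMod m) (M : ℕ) (e : Fin n → ZMod m) (y : ℕ → Fin n → ZMod m) :
    ℕ → Fin n → ZMod m :=
  fun k => if k < M then v k else if k = M then e else y (k - (M + 1))

theorem isNilpotent_natCast_pow (p : ℕ) (b : ℕ) :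
    IsNilpotent (p : AddMonoid.End (Fin n → ZMod (p ^ b))) := by
  refine ⟨b, ?_⟩
  rw [← Nat.cast_pow]
  ext x i
  rw [AddMonoid.End.natCast_apply]
  simp

section Shift

variable [NeZero n]

def shift : AddMonoid.End (Fin n → ZMod m) where
  toFun x i := x (i + 1)
  map_zero' := rfl
  map_add' _ _ := rfl

theorem shift_apply (x : Fin n → ZMod m) (i : Fin n) : shift x i = x (i + 1) := rfl

theorem shift_pow_apply (k : ℕ) (x : Fin n → ZMod m) (i : Fin n) :
    (shift ^ k) x i = x (i + k) := by
  induction k generalizing x with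
  | zero => simp
  | succ k ih =>
    rw [pow_succ, AddMonoid.End.coe_mul, Function.comp_apply, ih, shift_apply, Nat.cast_succ,
      add_assoc]

theorem shift_pow_self : (shift : AddMonoid.End (Fin n → ZMod m)) ^ n = 1 := by
  ext x i
  simp [shift_pow_apply]

theorem rotState_succ (y : ℕ → Fin n → ZMod m) (r : ℕ → Fin n) (s₀ : Fin n → ZMod m) (k : ℕ) :
    rotState y r s₀ (k + 1) = (shift ^ (r k : ℕ)) (rotState y r s₀ k + y k) := by
  ext i
  rw [shift_pow_apply, Fin.cast_val_eq_self]
  rfl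

theorem rotState_add (y : ℕ → Fin n → ZMod m) (r : ℕ → Fin n) (s₀ : Fin n → ZMod m) (k j : ℕ) :
    rotState y r s₀ (k + j) =
      rotState (fun i => y (k + i)) (fun i => r (k + i)) (rotState y r s₀ k) j := by
  induction j with
  | zero => rfl
  | succ j ih => rw [← add_assoc, rotState_succ, ih, rotState_succ]

theorem rotState_congr {y y' : ℕ → Fin n → ZMod m} (r : ℕ → Fin n) (s₀ : Fin n → ZMod m) {k : ℕ}
    (h : ∀ i < k, y i = y' i) : rotState y r s₀ k = rotState y' r s₀ k := by
  induction k with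
  | zero => rfl
  | succ k ih =>
    rw [rotState_succ, rotState_succ, ih fun i hi => h i (by omega), h k (by omega)]

section Subgroups

variable {G H : AddSubgroup (Fin n → ZMod m)}

theorem shift_pow_mem (hG : ∀ x ∈ G, shift x ∈ G) (k : ℕ) {x : Fin n → ZMod m} (hx : x ∈ G) :
    (shift ^ k) x ∈ G := by
  induction k with
  | zero => simpa
  | succ k ih => simpa [pow_succ'] using hG _ ih

theorem shift_pow_sub_mem (hG : ∀ x ∈ G, shift x ∈ G) (hGH : ∀ x ∈ G, shift x - x ∈ H) (k : ℕ)
    {x : Fin n → ZMod m} (hx : x ∈ G) : (shift ^ k) x - x ∈ H := by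
  induction k generalizing x with
  | zero => simp
  | succ k ih =>
    have h := add_mem (ih (hG x hx)) (hGH x hx)
    rwa [sub_add_sub_cancel, ← Function.comp_apply (f := ⇑(shift ^ k)), ← AddMonoid.End.coe_mul,
      ← pow_succ] at h

theorem rotState_mem (hG : ∀ x ∈ G, shift x ∈ G) {y : ℕ → Fin n → ZMod m} (hy : ∀ k, y k ∈ G)
    (r : ℕ → Fin n) {s₀ : Fin n → ZMod m} (hs₀ : s₀ ∈ G) (k : ℕ) : rotState y r s₀ k ∈ G := by
  induction k with
  | zero => exact hs₀
  | succ k ih => exact rotState_succ y r s₀ k ▸ shift_pow_mem hG _ (add_mem ih (hy k))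

theorem rotState_sub_mem (hG : ∀ x ∈ G, shift x ∈ G) (hGH : ∀ x ∈ G, shift x - x ∈ H)
    (hHG : H ≤ G) {y : ℕ → Fin n → ZMod m} (hy : ∀ k, y k ∈ H) (r : ℕ → Fin n)
    {s₀ : Fin n → ZMod m} (hs₀ : s₀ ∈ G) (k : ℕ) : rotState y r s₀ k - s₀ ∈ H := by
  induction k with
  | zero => simp [rotState]
  | succ k ih =>
    have hG' : rotState y r s₀ k + y k ∈ G :=
      add_mem (rotState_mem hG (fun k => hHG (hy k)) r hs₀ k) (hHG (hy k))
    have h := add_mem (add_mem (shift_pow_sub_mem hG hGH (r k) hG') ih) (hy k)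
    rw [rotState_succ]
    convert h using 1
    abel

variable {v y : ℕ → Fin n → ZMod m} {M N : ℕ} {S : Set (Fin n → ZMod m)} {e : Fin n → ZMod m}

theorem winsFrom_prepend (hG : ∀ x ∈ G, shift x ∈ G) (hGH : ∀ x ∈ G, shift x - x ∈ H)
    (hHG : H ≤ G) (hv : ∀ k, v k ∈ H) (hvM : WinsFrom H M v) (hSG : S ⊆ G)
    (hSH : ∀ s ∈ S, ∀ h ∈ H, s + h ∈ S) (he : e ∈ G) (hyN : WinsFrom S N y) :
    WinsFrom (H ∪ (· + e) ⁻¹' S) (M + 1 + N) (prepend v M e y) := by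
  rintro s₀ (hs₀ | hs₀) r
  · obtain ⟨k, hk, h0⟩ := hvM s₀ hs₀ r
    refine ⟨k, by omega, ?_⟩
    rwa [rotState_congr (y := prepend v M e y) (y' := v) r s₀
      fun i hi => if_pos (hi.trans_le hk)]
  · rw [Set.mem_preimage] at hs₀
    have hs₀G : s₀ ∈ G := by simpa using sub_mem (hSG hs₀) he
    have hs : rotState (prepend v M e y) r s₀ M - s₀ ∈ H := by
      rw [rotState_congr (y := prepend v M e y) (y' := v) r s₀ fun i hi => if_pos hi]
      exact rotState_sub_mem hG hGH hHG hv r hs₀G M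
    have hseG : rotState (prepend v M e y) r s₀ M + e ∈ G :=
      add_mem (by simpa using add_mem (hHG hs) hs₀G) he
    have hnext : rotState (prepend v M e y) r s₀ (M + 1) ∈ S := by
      have h := hSH _ hs₀ _ (add_mem (shift_pow_sub_mem hG hGH (r M) hseG) hs)
      rw [rotState_succ, show prepend v M e y M = e by simp [prepend]]
      convert h using 1
      abel
    obtain ⟨k, hk, h0⟩ := hyN _ hnext fun i => r (M + 1 + i)
    refine ⟨M + 1 + k, by omega, ?_⟩
    rw [rotState_add]
    convert h0 using 2
    funext i
    rw [prepend, if_neg (by omega), if_neg (by omega), Nat.add_sub_cancel_left]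

theorem exists_winsFrom_of_subset [NeZero m] (hG : ∀ x ∈ G, shift x ∈ G)
    (hGH : ∀ x ∈ G, shift x - x ∈ H) (hHG : H ≤ G) (hv : ∀ k, v k ∈ H)
    (hvM : WinsFrom H (Nat.card H - 1) v) (hSG : S ⊆ G)
    (hSH : ∀ s ∈ S, ∀ h ∈ H, s + h ∈ S) (hy : ∀ k, y k ∈ G) (hyN : WinsFrom S N y) :
    ∃ y' : ℕ → Fin n → ZMod m, (∀ k, y' k ∈ G) ∧ WinsFrom G (N + (Nat.card G - S.ncard)) y' := by
  have hcardG : Nat.card G = (G : Set (Fin n → ZMod m)).ncard := Nat.card_coe_set_eq _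
  rw [hcardG]
  induction h : (G : Set (Fin n → ZMod m)).ncard - S.ncard using Nat.strong_induction_on
    generalizing S N y with
  | _ d ih =>
  by_cases hSG' : S = G
  · subst hSG'
    rw [← h, Nat.sub_self, add_zero]
    exact ⟨y, hy, hyN⟩
  obtain ⟨e, heG, heS⟩ := Set.exists_of_ssubset (hSG.ssubset_of_ne hSG')
  set M := Nat.card H - 1
  set T := (H : Set (Fin n → ZMod m)) ∪ (· + e) ⁻¹' S
  have hTcard : T.ncard = Nat.card H + S.ncard := ncard_union_preimage_add hSH heS
  have hTG : T ⊆ G := Set.union_subset hHG fun x hx => by simpa using sub_mem (hSG hx) heG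
  have hTH : ∀ t ∈ T, ∀ h ∈ H, t + h ∈ T := by
    rintro t (ht | ht) h hh
    · exact Or.inl (add_mem ht hh)
    · exact Or.inr (by simpa [add_right_comm] using hSH _ ht _ hh)
  have hy' : ∀ k, prepend v M e y k ∈ G := fun k => by
    unfold prepend; split_ifs
    exacts [hHG (hv k), heG, hy _]
  have hHpos : 0 < Nat.card H := Nat.card_pos
  have hSlt : S.ncard < (G : Set (Fin n → ZMod m)).ncard :=
    Set.ncard_lt_ncard (hSG.ssubset_of_ne hSG')
  have hTle : T.ncard ≤ (G : Set (Fin n → ZMod m)).ncard := Set.ncard_le_ncard hTG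
  obtain ⟨y', hy'G, hy'win⟩ := ih _ (by omega) hTG hTH hy'
    (winsFrom_prepend hG hGH hHG hv hvM hSG hSH heG hyN) rfl
  refine ⟨y', hy'G, ?_⟩
  rwa [show M + 1 + N + ((G : Set (Fin n → ZMod m)).ncard - T.ncard) = N + d by omega] at hy'win

theorem exists_winsFrom_of_le [NeZero m] (hG : ∀ x ∈ G, shift x ∈ G)
    (hGH : ∀ x ∈ G, shift x - x ∈ H) (hHG : H ≤ G) (hv : ∀ k, v k ∈ H)
    (hvM : WinsFrom H (Nat.card H - 1) v) :
    ∃ y : ℕ → Fin n → ZMod m, (∀ k, y k ∈ G) ∧ WinsFrom G (Nat.card G - 1) y := by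
  obtain ⟨y, hyG, hyN⟩ := exists_winsFrom_of_subset hG hGH hHG hv hvM hHG
    (fun _ hs _ hh => add_mem hs hh) (fun k => hHG (hv k)) hvM
  have hHpos : 0 < Nat.card H := Nat.card_pos
  have hHG' : Nat.card H ≤ Nat.card G := AddSubgroup.card_le_of_le hHG
  have hcardH : (H : Set (Fin n → ZMod m)).ncard = Nat.card H := (Nat.card_coe_set_eq _).symm
  rw [hcardH, show Nat.card H - 1 + (Nat.card G - Nat.card H) = Nat.card G - 1 by omega] at hyN
  exact ⟨y, hyG, hyN⟩

end Subgroups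

theorem shift_commute_sub_one : Commute (shift : AddMonoid.End (Fin n → ZMod m)) (shift - 1) :=
  (Commute.refl shift).sub_right (Commute.one_right shift)

variable (n m) in
def shiftFiltration (k : ℕ) : AddSubgroup (Fin n → ZMod m) :=
  AddMonoidHom.range ((shift - 1 : AddMonoid.End (Fin n → ZMod m)) ^ k)

theorem exists_winsFrom_shiftFiltration [NeZero m] {N : ℕ}
    (hN : (shift - 1 : AddMonoid.End (Fin n → ZMod m)) ^ N = 0) {k : ℕ} (hk : k ≤ N) :
    ∃ y : ℕ → Fin n → ZMod m, (∀ i, y i ∈ shiftFiltration n m k) ∧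
      WinsFrom (shiftFiltration n m k) (Nat.card (shiftFiltration n m k) - 1) y := by
  induction hk using Nat.decreasingInduction with
  | self =>
    refine ⟨0, fun _ => zero_mem _, fun s₀ hs₀ r => ⟨0, Nat.zero_le _, ?_⟩⟩
    obtain ⟨z, rfl⟩ := hs₀
    exact DFunLike.congr_fun hN z
  | of_succ k hk ih =>
    obtain ⟨v, hv, hvwin⟩ := ih
    refine exists_winsFrom_of_le ?_ ?_ ?_ hv hvwin
    · rintro _ ⟨z, rfl⟩
      exact ⟨shift z, DFunLike.congr_fun (shift_commute_sub_one.pow_right k).eq z |>.symm⟩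
    · rintro _ ⟨z, rfl⟩
      exact ⟨z, by rw [pow_succ']; rfl⟩
    · rintro _ ⟨z, rfl⟩
      exact ⟨(shift - 1 : AddMonoid.End (Fin n → ZMod m)) z, by rw [pow_succ]; rfl⟩

theorem exists_rotWinning_of_isNilpotent [NeZero m]
    (hD : IsNilpotent (shift - 1 : AddMonoid.End (Fin n → ZMod m))) :
    ∃ y, RotWinning n m (m ^ n - 1) y := by
  obtain ⟨N, hN⟩ := hD
  obtain ⟨y, -, hy⟩ := exists_winsFrom_shiftFiltration hN (Nat.zero_le N)
  have htop : shiftFiltration n m 0 = ⊤ :=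
    AddMonoidHom.range_eq_top.2 fun x => ⟨x, rfl⟩
  rw [htop] at hy
  refine ⟨y, (rotWinning_iff_winsFrom_univ _ _).2 ?_⟩
  simpa [Nat.card_fun] using hy

end Shift

end RotationGame

theorem win_prime_power_with_length_general (p a b : ℕ) (hp : p.Prime) :
    (∃ y : ℕ → Fin (p ^ a) → ZMod (p ^ b),
      RotWinning (p ^ a) (p ^ b) (p ^ (b * p ^ a) - 1) y) ∧
    RotCanWin (p ^ a) (p ^ b) := by
  have : NeZero p := ⟨hp.ne_zero⟩
  have hD : IsNilpotent (RotationGame.shift - 1 : AddMonoid.End (Fin (p ^ a) → ZMod (p ^ b))) :=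
    isNilpotent_sub_one_of_pow_prime_pow_eq_one hp (RotationGame.isNilpotent_natCast_pow p b)
      RotationGame.shift_pow_self
  obtain ⟨y, hy⟩ := RotationGame.exists_rotWinning_of_isNilpotent hD
  rw [← pow_mul] at hy
  exact ⟨⟨y, hy⟩, _, y, hy⟩

theorem win_prime_power_with_length (p a b : ℕ) (hp : p.Prime) (ha : 0 < a) (hb : 0 < b) :
    (∃ y : ℕ → Fin (p ^ a) → ZMod (p ^ b),
      RotWinning (p ^ a) (p ^ b) (p ^ (b * p ^ a) - 1) y) ∧
    RotCanWin (p ^ a) (p ^ b) :=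
  win_prime_power_with_length_general p a b hp
end
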